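/- Let $H$ be a bounded self-adjoint operator on $\ell^2(\mathbb{N})$ with increasing finite-rank projections $P_n \to I$ strongly, and assume $H$ is banded so that $(H - z)P_n = P_{f(n)}(H-z)P_n$ for some $f(n) \ge n$. Define $F_n(z) = \inf\{\|(H-z)\psi\| : \psi \in \mathrm{ran}(P_n), \|\psi\| = 1\}$. Then for every $z \in \mathbb{C}$, $F_n(z)$ is non-increasing in $n$ and $\lim_{n\to\infty} F_n(z) = \mathrm{dist}(z, \mathrm{Sp}(H))$. -/

import Mathlib

set_option synthInstance.maxHeartbeats 1000000
set_option maxHeartbeats 1000000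
set_option linter.unusedVariables false

open Metric

lemma lowerBound (H : lp (fun _ : ℕ => ℂ) 2 →L[ℂ] lp (fun _ : ℕ => ℂ) 2)
    (hH : IsSelfAdjoint H) (z : ℂ) (ψ : lp (fun _ : ℕ => ℂ) 2) :
    infDist z (spectrum ℂ H) * ‖ψ‖ ≤ ‖H ψ - z • ψ‖ := by
  have hsn : IsStarNormal H := hH.isStarNormal
  set d := infDist z (spectrum ℂ H) with hd
  rcases eq_or_lt_of_le (infDist_nonneg : 0 ≤ d) with h0 | h0
  · rw [hd, ← h0, zero_mul]; exact norm_nonneg _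
  · have hz : z ∉ spectrum ℂ H := by
      intro hzin
      have := infDist_zero_of_mem hzin
      rw [← hd] at this; linarith
    set g : ℂ → ℂ := fun w => (w - z)⁻¹ with hgdef
    have hne : ∀ w ∈ spectrum ℂ H, w - z ≠ 0 := fun w hw h =>
      hz (by rw [sub_eq_zero] at h; exact h ▸ hw)
    have hg : ContinuousOn g (spectrum ℂ H) :=
      ((continuousOn_id.sub continuousOn_const).inv₀ hne)
    have hsub : ContinuousOn (fun w : ℂ => w - z) (spectrum ℂ H) :=
      (continuousOn_id.sub continuousOn_const)
    have key : cfc g H * (H - z • 1) = 1 := by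
      have h1 : H - z • 1 = cfc (fun w : ℂ => w - z) H := by
        rw [cfc_sub (fun w : ℂ => w) (fun _ : ℂ => z) H, cfc_id' ℂ H, cfc_const z H,
          Algebra.algebraMap_eq_smul_one]
      rw [h1, ← cfc_mul g _ H hg hsub]
      have heq : (spectrum ℂ H).EqOn (fun w => g w * (w - z)) 1 := fun w hw => by
        simp [hgdef, inv_mul_cancel₀ (hne w hw)]
      rw [cfc_congr heq, cfc_one ℂ H]
    have hnorm : ‖cfc g H‖ ≤ d⁻¹ := by
      refine norm_cfc_le (by positivity) fun w hw => ?_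
      have hdd : d ≤ ‖w - z‖ := by
        have := infDist_le_dist_of_mem (x := z) hw
        rwa [dist_eq_norm, norm_sub_rev, ← hd] at this
      simpa [hgdef] using inv_anti₀ h0 hdd
    have happ : H ψ - z • ψ = (H - z • 1) ψ := by
      simp [ContinuousLinearMap.sub_apply, ContinuousLinearMap.smul_apply]
    have hle : ‖ψ‖ ≤ d⁻¹ * ‖H ψ - z • ψ‖ := by
      calc ‖ψ‖ = ‖(cfc g H * (H - z • 1)) ψ‖ := by rw [key]; simp
        _ = ‖cfc g H ((H - z • 1) ψ)‖ := by rw [ContinuousLinearMap.mul_apply]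
        _ ≤ ‖cfc g H‖ * ‖(H - z • 1) ψ‖ := ContinuousLinearMap.le_opNorm _ _
        _ ≤ d⁻¹ * ‖H ψ - z • ψ‖ := by
            rw [← happ]; exact mul_le_mul_of_nonneg_right hnorm (norm_nonneg _)
    calc d * ‖ψ‖ ≤ d * (d⁻¹ * ‖H ψ - z • ψ‖) := mul_le_mul_of_nonneg_left hle h0.le
      _ = ‖H ψ - z • ψ‖ := by rw [← mul_assoc, mul_inv_cancel₀ (show d ≠ 0 from h0.ne'), one_mul]

lemma upperBound (H : lp (fun _ : ℕ => ℂ) 2 →L[ℂ] lp (fun _ : ℕ => ℂ) 2)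
    (hH : IsSelfAdjoint H) (z : ℂ) {ε : ℝ} (hε : 0 < ε) :
    ∃ ψ : lp (fun _ : ℕ => ℂ) 2, ‖ψ‖ = 1 ∧
      ‖H ψ - z • ψ‖ ≤ infDist z (spectrum ℂ H) + ε := by
  have hsn : IsStarNormal H := hH.isStarNormal
  have hnt : Nontrivial (lp (fun _ : ℕ => ℂ) 2) := by
    refine ⟨lp.single 2 0 (1 : ℂ), 0, fun h => ?_⟩
    have h0 := congrFun (congrArg Subtype.val h) 0
    rw [lp.single_apply_self] at h0
    exact one_ne_zero h0
  have hnt2 : Nontrivial (lp (fun _ : ℕ => ℂ) 2 →L[ℂ] lp (fun _ : ℕ => ℂ) 2) := by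
    infer_instance
  obtain ⟨l, hl, hld⟩ := (spectrum.isCompact H).exists_infDist_eq_dist (spectrum.nonempty H) z
  set d := infDist z (spectrum ℂ H) with hd
  set ε' : ℝ := ε / 2 with hε'
  have hε'0 : 0 < ε' := by positivity
  set f : ℂ → ℂ := fun w => ((1 - dist w l / ε') ⊔ 0 : ℝ) with hfdef
  have hfc : Continuous f :=
    Complex.continuous_ofReal.comp
      ((continuous_const.sub ((continuous_id.dist continuous_const).div_const _)).max
        continuous_const)
  have hfl : f l = 1 := by simp [hfdef, hε'0.ne']
  have hfb : ∀ w, ‖f w‖ ≤ 1 := fun w => by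
    simp only [hfdef, Complex.norm_real]
    rw [Real.norm_eq_abs, abs_of_nonneg (le_max_right _ _)]
    rcases le_or_gt (dist w l / ε') 1 with h | h
    · have : 0 ≤ dist w l / ε' := by positivity
      rw [max_eq_left (by linarith)]; linarith
    · rw [max_eq_right (by linarith)]; norm_num
  set g : ℂ → ℂ := fun w => (w - l) * f w with hgdef
  have hgb : ∀ w, ‖g w‖ ≤ ε' := fun w => by
    rcases le_or_gt (dist w l) ε' with h | h
    · calc ‖g w‖ = ‖w - l‖ * ‖f w‖ := norm_mul _ _
        _ ≤ ε' * 1 := by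
            refine mul_le_mul ?_ (hfb w) (norm_nonneg _) hε'0.le
            rwa [dist_eq_norm] at h
        _ = ε' := mul_one _
    · have hle0 : (1 - dist w l / ε') ≤ 0 := by
        have : 1 < dist w l / ε' := (one_lt_div hε'0).2 h
        linarith
      have : f w = 0 := by
        simp only [hfdef]
        norm_cast
        rw [max_eq_right hle0]
      simp [hgdef, this, hε'0.le]
  set b := cfc f H with hb
  have hbnorm : 1 ≤ ‖b‖ := by
    have := norm_apply_le_norm_cfc f H hl hfc.continuousOn hsn
    rwa [hfl, norm_one] at this
  -- find φ with ‖b φ‖ > (1/2) ‖φ‖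
  have hφ : ∃ φ : lp (fun _ : ℕ => ℂ) 2, (1/2 : ℝ) * ‖φ‖ < ‖b φ‖ := by
    by_contra hcon
    push_neg at hcon
    have : ‖b‖ ≤ 1/2 := ContinuousLinearMap.opNorm_le_bound b (by norm_num)
      (fun φ => (hcon φ))
    linarith
  obtain ⟨φ, hφ⟩ := hφ
  set ψ₀ := b φ with hψ₀
  have hψ₀pos : 0 < ‖ψ₀‖ := lt_of_le_of_lt (by positivity) hφ
  have hkey : (H - l • 1) * b = cfc g H := by
    have h1 : H - l • 1 = cfc (fun w : ℂ => w - l) H := by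
      rw [cfc_sub (fun w : ℂ => w) (fun _ : ℂ => l) H, cfc_id' ℂ H, cfc_const l H,
        Algebra.algebraMap_eq_smul_one]
    rw [h1, hb, ← cfc_mul (fun w : ℂ => w - l) f H
      ((continuous_id.sub continuous_const).continuousOn) hfc.continuousOn]
  have hnum : ‖H ψ₀ - l • ψ₀‖ ≤ ε' * ‖φ‖ := by
    have : H ψ₀ - l • ψ₀ = ((H - l • 1) * b) φ := by
      simp [hψ₀, ContinuousLinearMap.mul_apply, ContinuousLinearMap.sub_apply,
        ContinuousLinearMap.smul_apply]
    rw [this, hkey]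
    calc ‖cfc g H φ‖ ≤ ‖cfc g H‖ * ‖φ‖ := ContinuousLinearMap.le_opNorm _ _
      _ ≤ ε' * ‖φ‖ := mul_le_mul_of_nonneg_right
          (norm_cfc_le hε'0.le (fun w _ => hgb w)) (norm_nonneg _)
  have hφle : ‖φ‖ ≤ 2 * ‖ψ₀‖ := by
    nlinarith [hφ]
  refine ⟨(‖ψ₀‖⁻¹ : ℂ) • ψ₀, ?_, ?_⟩
  · rw [norm_smul]
    simp [hψ₀pos.ne']
  · have hdist : ‖l - z‖ = d := by
      rw [hld, dist_comm, Complex.dist_eq]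
    have hsplit : H ψ₀ - z • ψ₀ = (H ψ₀ - l • ψ₀) + (l - z) • ψ₀ := by
      rw [sub_smul]; abel
    have hbound : ‖H ψ₀ - z • ψ₀‖ ≤ (d + ε) * ‖ψ₀‖ := by
      calc ‖H ψ₀ - z • ψ₀‖ ≤ ‖H ψ₀ - l • ψ₀‖ + ‖(l - z) • ψ₀‖ := by
            rw [hsplit]; exact norm_add_le _ _
        _ ≤ ε' * ‖φ‖ + d * ‖ψ₀‖ := by
            rw [norm_smul, hdist]; exact add_le_add hnum le_rfl
        _ ≤ ε' * (2 * ‖ψ₀‖) + d * ‖ψ₀‖ := by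
            exact add_le_add (mul_le_mul_of_nonneg_left hφle hε'0.le) le_rfl
        _ = (d + ε) * ‖ψ₀‖ := by rw [hε']; ring
    have happ : H ((‖ψ₀‖⁻¹ : ℂ) • ψ₀) - z • ((‖ψ₀‖⁻¹ : ℂ) • ψ₀)
        = (‖ψ₀‖⁻¹ : ℂ) • (H ψ₀ - z • ψ₀) := by
      rw [map_smul, smul_sub, smul_comm]
    rw [happ, norm_smul]
    have : ‖(‖ψ₀‖⁻¹ : ℂ)‖ = ‖ψ₀‖⁻¹ := by
      simp [abs_of_nonneg (inv_nonneg.2 (norm_nonneg _))]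
    rw [this]
    calc ‖ψ₀‖⁻¹ * ‖H ψ₀ - z • ψ₀‖ ≤ ‖ψ₀‖⁻¹ * ((d + ε) * ‖ψ₀‖) :=
          mul_le_mul_of_nonneg_left hbound (by positivity)
      _ = d + ε := by field_simp

open Filter



open Filter

/-- For a bounded self-adjoint banded operator `H` on `ℓ²(ℕ)`, the quantities
`Fₙ(z) = inf { ‖(H-z)ψ‖ : ψ ∈ ran Pₙ, ‖ψ‖ = 1 }` are non-increasing in `n` (for `n ≥ 1`)
and converge to `dist(z, Sp(H))` as `n → ∞`. -/
theorem stmt_16 (H : lp (fun _ : ℕ => ℂ) 2 →L[ℂ] lp (fun _ : ℕ => ℂ) 2)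
    (hH : IsSelfAdjoint H)
    (f : ℕ → ℕ) (hf : ∀ n, n ≤ f n)
    -- bandedness: `(H - z)Pₙ = P_{f(n)}(H - z)Pₙ`, i.e. `H` maps `ran Pₙ` into `ran P_{f n}`
    (hband : ∀ (n : ℕ) (ψ : lp (fun _ : ℕ => ℂ) 2), (∀ i : ℕ, n ≤ i → ψ i = 0) →
        ∀ i : ℕ, f n ≤ i → (H ψ) i = 0)
    (z : ℂ)
    (F : ℕ → ℝ)
    (hF : ∀ n : ℕ, F n = sInf ((fun ψ : lp (fun _ : ℕ => ℂ) 2 => ‖H ψ - z • ψ‖) ''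
        {ψ : lp (fun _ : ℕ => ℂ) 2 | ‖ψ‖ = 1 ∧ ∀ i : ℕ, n ≤ i → ψ i = 0})) :
    (∀ m n : ℕ, 1 ≤ m → m ≤ n → F n ≤ F m) ∧
      Tendsto F atTop (nhds (Metric.infDist z (spectrum ℂ H))) := by
  classical
  set d := Metric.infDist z (spectrum ℂ H) with hd
  set S : ℕ → Set ℝ := fun n => ((fun ψ : lp (fun _ : ℕ => ℂ) 2 => ‖H ψ - z • ψ‖) ''
      {ψ : lp (fun _ : ℕ => ℂ) 2 | ‖ψ‖ = 1 ∧ ∀ i : ℕ, n ≤ i → ψ i = 0}) with hS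
  have hbdd : ∀ n, BddBelow (S n) := fun n =>
    ⟨0, by rintro x ⟨ψ, hψ, rfl⟩; positivity⟩
  have hwit : ∀ n : ℕ, 1 ≤ n → ∃ ψ : lp (fun _ : ℕ => ℂ) 2,
      ‖ψ‖ = 1 ∧ ∀ i, n ≤ i → ψ i = 0 := by
    intro n hn
    refine ⟨lp.single 2 0 (1 : ℂ), ?_, ?_⟩
    · have := lp.norm_single (p := 2) (E := fun _ : ℕ => ℂ) (by norm_num)
        0 (1 : ℂ)
      simpa using this
    · intro i hi
      exact lp.single_apply_ne 2 0 _ (by omega)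
  have hne : ∀ n : ℕ, 1 ≤ n → (S n).Nonempty := by
    intro n hn
    obtain ⟨ψ, h1, h2⟩ := hwit n hn
    exact ⟨_, ⟨ψ, ⟨h1, h2⟩, rfl⟩⟩
  have hmono : ∀ m n : ℕ, 1 ≤ m → m ≤ n → F n ≤ F m := by
    intro m n hm hmn
    rw [hF m, hF n]
    refine csInf_le_csInf (hbdd n) (hne m hm) ?_
    rintro x ⟨ψ, ⟨h1, h2⟩, rfl⟩
    exact ⟨ψ, ⟨h1, fun i hi => h2 i (le_trans hmn hi)⟩, rfl⟩
  have hlow : ∀ n : ℕ, 1 ≤ n → d ≤ F n := by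
    intro n hn
    rw [hF n]
    refine le_csInf (hne n hn) ?_
    rintro x ⟨ψ, ⟨h1, h2⟩, rfl⟩
    have := lowerBound H hH z ψ
    rw [h1, mul_one] at this
    exact this
  refine ⟨hmono, ?_⟩
  rw [Metric.tendsto_atTop]
  intro ε hε
  obtain ⟨ψ, hψ1, hψ2⟩ := upperBound H hH z (show (0:ℝ) < ε/4 by linarith)
  set s : ℕ → lp (fun _ : ℕ => ℂ) 2 :=
    fun n => ∑ i ∈ Finset.range n, lp.single 2 i (ψ i) with hs
  have hts : Tendsto s atTop (nhds ψ) :=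
    (lp.hasSum_single (by norm_num) ψ).tendsto_sum_nat
  have htn : Tendsto (fun n => ‖s n‖) atTop (nhds 1) := by
    simpa [hψ1] using hts.norm
  have htX : Tendsto (fun n => ‖H (s n) - z • (s n)‖) atTop (nhds ‖H ψ - z • ψ‖) :=
    (((H.continuous.tendsto ψ).comp hts).sub (hts.const_smul z)).norm
  have hq : Tendsto (fun n => ‖s n‖⁻¹ * ‖H (s n) - z • (s n)‖) atTop
      (nhds ‖H ψ - z • ψ‖) := by
    have := (htn.inv₀ (one_ne_zero)).mul htX
    simpa using this
  have hlt : ‖H ψ - z • ψ‖ < d + ε/2 := lt_of_le_of_lt hψ2 (by linarith)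
  have hev1 : ∀ᶠ n in atTop, ‖s n‖⁻¹ * ‖H (s n) - z • (s n)‖ < d + ε/2 :=
    hq.eventually_lt_const hlt
  have hev2 : ∀ᶠ n in atTop, (1/2 : ℝ) < ‖s n‖ := htn.eventually_const_lt (by norm_num)
  have hev3 : ∀ᶠ n : ℕ in atTop, 1 ≤ n := eventually_ge_atTop 1
  have hcoords : ∀ (n i : ℕ), n ≤ i → (s n : ∀ j : ℕ, ℂ) i = 0 := by
    intro n i hi
    simp only [hs, lp.coeFn_sum, Finset.sum_apply, lp.single_apply, Finset.sum_dite_eq,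
      Finset.sum_dite_eq']
    simp [Pi.single_apply]
    omega
  have hev : ∀ᶠ n in atTop, dist (F n) d < ε := by
    filter_upwards [hev1, hev2, hev3] with n h1 h2 h3
    have hsnorm : ‖s n‖ ≠ 0 := by linarith
    set φ : lp (fun _ : ℕ => ℂ) 2 := ((‖s n‖⁻¹ : ℝ) : ℂ) • s n with hφdef
    have hφnorm : ‖φ‖ = 1 := by
      rw [hφdef, norm_smul]
      simp only [Complex.norm_real, Real.norm_eq_abs,
        abs_of_nonneg (inv_nonneg.2 (norm_nonneg _))]
      exact inv_mul_cancel₀ hsnorm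
    have hφsupp : ∀ i : ℕ, n ≤ i → φ i = 0 := by
      intro i hi
      rw [hφdef, lp.coeFn_smul, Pi.smul_apply, hcoords n i hi, smul_zero]
    have hFn : F n ≤ ‖H φ - z • φ‖ := by
      rw [hF n]
      exact csInf_le (hbdd n) ⟨φ, ⟨hφnorm, hφsupp⟩, rfl⟩
    have hcomp : ‖H φ - z • φ‖ = ‖s n‖⁻¹ * ‖H (s n) - z • (s n)‖ := by
      rw [hφdef]
      rw [map_smul, smul_comm z, ← smul_sub, norm_smul]
      simp [abs_of_nonneg (inv_nonneg.2 (norm_nonneg _))]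
    have hup : F n < d + ε/2 := lt_of_le_of_lt (hcomp ▸ hFn) h1
    have hdown : d ≤ F n := hlow n h3
    rw [Real.dist_eq, abs_lt]
    constructor <;> linarith
  exact eventually_atTop.1 hev
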